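/- arXiv:1708.05741 — 5 statements merged into one kernel-verified Lean document; each statement's English description precedes it below -/
import Mathlib

section
/- Let x be a feasible point of the linear program (x ≥ 0 componentwise and A x ≤ b componentwise), let q ≠ r be two column indices, and let λ ≥ 0 be a real number such that λ·A_{i q} ≤ A_{i r} for every row index i. Define x' by x'_q = x_q + λ·x_r, x'_r = 0, and x'_j = x_j for all j ∉ {q, r}. Then x' is feasible (x' ≥ 0 and A x' ≤ b), and the objective values satisfy c·x' − c·x = x_r·(λ·c_q − c_r). -/
/-- Column-swap operation for a linear program `max c·x s.t. A x ≤ b, x ≥ 0`: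
if `λ ≥ 0` satisfies `λ·A i q ≤ A i r` for every row `i`, then moving the mass of
coordinate `r` onto coordinate `q` (scaled by `λ`) preserves feasibility and changes
the objective by `x r * (λ * c q - c r)`. -/
theorem lp_column_swap {m n : ℕ} (A : Fin m → Fin n → ℝ) (b : Fin m → ℝ) (c : Fin n → ℝ)
    (x : Fin n → ℝ) (hx0 : ∀ j, 0 ≤ x j) (hxA : ∀ i, (∑ j, A i j * x j) ≤ b i)
    (q r : Fin n) (hqr : q ≠ r) (lam : ℝ) (hlam : 0 ≤ lam)
    (hA : ∀ i, lam * A i q ≤ A i r)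
    (x' : Fin n → ℝ)
    (hx' : x' = fun j => if j = q then x q + lam * x r else if j = r then 0 else x j) :
    (∀ j, 0 ≤ x' j) ∧ (∀ i, (∑ j, A i j * x' j) ≤ b i) ∧
      (∑ j, c j * x' j) - (∑ j, c j * x j) = x r * (lam * c q - c r) := by
  subst hx'
  have key : ∀ f : Fin n → ℝ,
      (∑ j, f j * (if j = q then x q + lam * x r else if j = r then 0 else x j))
        - (∑ j, f j * x j) = x r * (lam * f q - f r) := by
    intro f
    rw [← Finset.sum_sub_distrib]
    have hsub : ({q, r} : Finset (Fin n)) ⊆ Finset.univ := Finset.subset_univ _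
    rw [← Finset.sum_subset hsub (by
      intro j _ hj
      simp only [Finset.mem_insert, Finset.mem_singleton, not_or] at hj
      simp [hj.1, hj.2])]
    rw [Finset.sum_pair hqr]
    simp [hqr, hqr.symm]
    ring
  refine ⟨?_, ?_, key c⟩
  · intro j
    by_cases hq : j = q
    · simp only [hq, if_true]
      have := mul_nonneg hlam (hx0 r)
      linarith [hx0 q]
    · by_cases hr : j = r <;> simp [hq, hr, hqr.symm, hx0 j]
  · intro i
    have h := key (A i)
    have hle : x r * (lam * A i q - A i r) ≤ 0 :=
      mul_nonpos_of_nonneg_of_nonpos (hx0 r) (by linarith [hA i])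
    linarith [hxA i]
end

section
/- Suppose there exist column indices q ≠ r and a real λ > 0 such that λ·c_q > c_r and λ·A_{i q} ≤ A_{i r} for every row index i. Then every optimal solution x of the linear program max c·x subject to A x ≤ b, x ≥ 0 satisfies x_r = 0. -/
/-- Strict column domination: if there are columns `q ≠ r` and `λ > 0` with
`λ·c q > c r` and `λ·A i q ≤ A i r` for every row `i`, then every optimal solution
of the linear program `max c·x s.t. A x ≤ b, x ≥ 0` satisfies `x r = 0`. -/
theorem lp_strict_domination_zero {m n : ℕ} (A : Fin m → Fin n → ℝ) (b : Fin m → ℝ)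
    (c : Fin n → ℝ) (q r : Fin n) (hqr : q ≠ r) (lam : ℝ) (hlam : 0 < lam)
    (hc : c r < lam * c q) (hA : ∀ i, lam * A i q ≤ A i r)
    (x : Fin n → ℝ)
    (hfeas : (∀ j, 0 ≤ x j) ∧ ∀ i, (∑ j, A i j * x j) ≤ b i)
    (hopt : ∀ y : Fin n → ℝ, ((∀ j, 0 ≤ y j) ∧ ∀ i, (∑ j, A i j * y j) ≤ b i) →
      (∑ j, c j * y j) ≤ ∑ j, c j * x j) :
    x r = 0 := by
  by_contra h
  have hr : 0 < x r := lt_of_le_of_ne (hfeas.1 r) (Ne.symm h)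
  set y : Fin n → ℝ := fun j =>
    x j + (if j = q then lam * x r else 0) - (if j = r then x r else 0) with hy
  have hsum : ∀ v : Fin n → ℝ,
      (∑ j, v j * y j) = (∑ j, v j * x j) + v q * (lam * x r) - v r * x r := by
    intro v
    simp only [hy, mul_sub, mul_add, mul_ite, mul_zero, Finset.sum_sub_distrib,
      Finset.sum_add_distrib, Finset.sum_ite_eq', Finset.mem_univ, if_true]
  have hfy : (∀ j, 0 ≤ y j) ∧ ∀ i, (∑ j, A i j * y j) ≤ b i := by
    constructor
    · intro j
      by_cases hjq : j = q
      · subst hjq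
        simp only [hy, if_pos rfl, if_neg hqr, if_true, sub_zero]
        have : 0 ≤ lam * x r := le_of_lt (mul_pos hlam hr)
        linarith [hfeas.1 j]
      · by_cases hjr : j = r
        · subst hjr
          simp [hy, hjq]
        · simpa [hy, hjq, hjr] using hfeas.1 j
    · intro i
      rw [hsum (A i)]
      have h1 : A i q * (lam * x r) ≤ A i r * x r := by
        have := mul_le_mul_of_nonneg_right (hA i) (le_of_lt hr)
        linarith [this]
      linarith [hfeas.2 i]
  have := hopt y hfy
  rw [hsum c] at this
  have h2 : c r * x r < c q * (lam * x r) := by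
    have := mul_lt_mul_of_pos_right hc hr
    linarith [this]
  linarith
end

section
/- Suppose there exist column indices q ≠ r and a real λ ≥ 0 such that λ·c_q ≥ c_r and λ·A_{i q} ≤ A_{i r} for every row index i. Then for every feasible x there exists a feasible x' with x'_r = 0 and c·x' ≥ c·x. In particular, if the linear program max c·x subject to A x ≤ b, x ≥ 0 has an optimal solution, then it has an optimal solution x* with x*_r = 0. -/
/-- Feasibility for the linear program `max c·x s.t. A x ≤ b, x ≥ 0`. -/
def LPFeasible {m n : ℕ} (A : Fin m → Fin n → ℝ) (b : Fin m → ℝ) (x : Fin n → ℝ) : Prop :=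
  (∀ j, 0 ≤ x j) ∧ ∀ i, (∑ j, A i j * x j) ≤ b i

/-- Weak column domination: if there are columns `q ≠ r` and `λ ≥ 0` with
`λ·c q ≥ c r` and `λ·A i q ≤ A i r` for every row `i`, then every feasible point
can be replaced by a feasible point with `r`-th coordinate `0` and no smaller
objective; in particular if an optimal solution exists then one exists with
`r`-th coordinate `0`. -/
theorem lp_weak_domination {m n : ℕ} (A : Fin m → Fin n → ℝ) (b : Fin m → ℝ)
    (c : Fin n → ℝ) (q r : Fin n) (hqr : q ≠ r) (lam : ℝ) (hlam : 0 ≤ lam)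
    (hc : c r ≤ lam * c q) (hA : ∀ i, lam * A i q ≤ A i r) :
    (∀ x : Fin n → ℝ, LPFeasible A b x →
      ∃ x' : Fin n → ℝ, LPFeasible A b x' ∧ x' r = 0 ∧
        (∑ j, c j * x j) ≤ ∑ j, c j * x' j) ∧
    ((∃ x : Fin n → ℝ, LPFeasible A b x ∧
        ∀ y : Fin n → ℝ, LPFeasible A b y → (∑ j, c j * y j) ≤ ∑ j, c j * x j) →
      ∃ xs : Fin n → ℝ, (LPFeasible A b xs ∧
        ∀ y : Fin n → ℝ, LPFeasible A b y → (∑ j, c j * y j) ≤ ∑ j, c j * xs j) ∧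
        xs r = 0) := by
  have main : ∀ x : Fin n → ℝ, LPFeasible A b x →
      ∃ x' : Fin n → ℝ, LPFeasible A b x' ∧ x' r = 0 ∧
        (∑ j, c j * x j) ≤ ∑ j, c j * x' j := by
    intro x hx
    obtain ⟨hx0, hxb⟩ := hx
    set x' : Fin n → ℝ := fun j =>
      x j + (lam * x r) * (if j = q then (1:ℝ) else 0) - x r * (if j = r then (1:ℝ) else 0)
      with hx'
    have sumlem : ∀ d : Fin n → ℝ,
        (∑ j, d j * x' j) = (∑ j, d j * x j) + lam * x r * d q - x r * d r := by
      intro d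
      have : ∀ j, d j * x' j =
          d j * x j + (lam * x r) * (if j = q then d j else 0)
            - x r * (if j = r then d j else 0) := by
        intro j
        simp only [hx']
        by_cases h1 : j = q <;> by_cases h2 : j = r <;> simp [h1, h2, hqr] <;> ring
      simp only [this, Finset.sum_sub_distrib, Finset.sum_add_distrib,
        ← Finset.mul_sum, Finset.sum_ite_eq', Finset.mem_univ, if_true]
    have hxr' : x' r = 0 := by
      simp [hx', (Ne.symm hqr : r ≠ q)]
    refine ⟨x', ⟨?_, ?_⟩, hxr', ?_⟩
    · intro j
      by_cases h2 : j = r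
      · rw [h2, hxr']
      · simp only [hx', h2, if_false, mul_zero, sub_zero]
        by_cases h1 : j = q
        · simp only [h1, if_true, mul_one]
          nlinarith [hx0 q, hx0 r]
        · simp [h1, hx0 j]
    · intro i
      rw [sumlem (A i)]
      have : lam * x r * A i q - x r * A i r ≤ 0 := by
        nlinarith [hA i, hx0 r]
      linarith [hxb i]
    · rw [sumlem c]
      nlinarith [hx0 r]
  refine ⟨main, ?_⟩
  rintro ⟨x, hx, hopt⟩
  obtain ⟨x', hx', hr, hle⟩ := main x hx
  exact ⟨x', ⟨hx', fun y hy => le_trans (hopt y hy) hle⟩, hr⟩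
end

section
/- Suppose there exist actions a^n ≠ a^d in S such that g(b)(a^n) ≤ g(b)(a^d) for every b ∈ B and F(a^n) ≥ F(a^d). Then for every feasible q there exists a feasible q' with q'(a^d) = 0 and ∑_{a∈S} q'(a)·F(a) ≥ ∑_{a∈S} q(a)·F(a); consequently, if the attacker's stage linear program has an optimal solution, it has an optimal solution q* with q*(a^d) = 0. -/
/-- Feasibility for the attacker's stage linear program. -/
def AttFeasible {S B : Type*} [Fintype S] (g : B → S → ℝ) (q : S → ℝ) : Prop :=
  (∀ a, 0 ≤ q a) ∧ (∑ a, q a) = 1 ∧ ∀ b, (∑ a, q a * g b a) ≤ 0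

open Classical in
private lemma sum_shift_aux {S : Type*} [Fintype S]
    (q h : S → ℝ) (an ad : S) (hne : an ≠ ad) :
    (∑ a, (Function.update (Function.update q ad 0) an (q an + q ad)) a * h a)
      = (∑ a, q a * h a) + q ad * (h an - h ad) := by
  set q' := Function.update (Function.update q ad 0) an (q an + q ad) with hq'
  have key : (∑ a, (q' a - q a) * h a) = q ad * (h an - h ad) := by
    have hsupp : ∀ a ∈ Finset.univ, a ∉ ({an, ad} : Finset S) →
        (q' a - q a) * h a = 0 := by
      intro a _ ha
      simp only [Finset.mem_insert, Finset.mem_singleton, not_or] at ha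
      simp [hq', Function.update_of_ne ha.1, Function.update_of_ne ha.2]
    have := Finset.sum_subset (Finset.subset_univ ({an, ad} : Finset S)) hsupp
    rw [← this, Finset.sum_pair hne]
    simp [hq', Function.update_of_ne hne, Function.update_of_ne (Ne.symm hne)]
    ring
  have expand : (∑ a, (q' a - q a) * h a)
      = (∑ a, q' a * h a) - ∑ a, q a * h a := by
    rw [← Finset.sum_sub_distrib]
    exact Finset.sum_congr rfl (fun a _ => by ring)
  linarith [key, expand]

/-- Weak domination in the attacker's stage linear program: if `an ≠ ad` with
`g b an ≤ g b ad` for all `b` and `F an ≥ F ad`, then every feasible `q` can be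
replaced by a feasible `q'` with `q' ad = 0` and no smaller objective; hence if
an optimal solution exists, one exists putting zero probability on `ad`. -/
theorem attacker_lp_weak_domination {S B : Type*} [Fintype S] [Nonempty S]
    [Fintype B] [Nonempty B]
    (F : S → ℝ) (g : B → S → ℝ) (an ad : S) (hne : an ≠ ad)
    (hg : ∀ b, g b an ≤ g b ad) (hF : F ad ≤ F an) :
    (∀ q : S → ℝ, AttFeasible g q →
      ∃ q' : S → ℝ, AttFeasible g q' ∧ q' ad = 0 ∧
        (∑ a, q a * F a) ≤ ∑ a, q' a * F a) ∧
    ((∃ q : S → ℝ, AttFeasible g q ∧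
        ∀ q' : S → ℝ, AttFeasible g q' → (∑ a, q' a * F a) ≤ ∑ a, q a * F a) →
      ∃ qs : S → ℝ, (AttFeasible g qs ∧
        ∀ q' : S → ℝ, AttFeasible g q' → (∑ a, q' a * F a) ≤ ∑ a, qs a * F a) ∧
        qs ad = 0) := by
  classical
  have main : ∀ q : S → ℝ, AttFeasible g q →
      ∃ q' : S → ℝ, AttFeasible g q' ∧ q' ad = 0 ∧
        (∑ a, q a * F a) ≤ ∑ a, q' a * F a := by
    intro q ⟨hpos, hsum, hcon⟩
    refine ⟨Function.update (Function.update q ad 0) an (q an + q ad), ?_, ?_, ?_⟩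
    · refine ⟨?_, ?_, ?_⟩
      · intro a
        by_cases h1 : a = an
        · subst h1
          simp only [Function.update_self]
          exact add_nonneg (hpos _) (hpos _)
        · rw [Function.update_of_ne h1]
          by_cases h2 : a = ad
          · subst h2; simp
          · rw [Function.update_of_ne h2]; exact hpos a
      · have := sum_shift_aux q (fun _ => 1) an ad hne
        simp only [mul_one] at this
        simpa [this] using hsum
      · intro b
        have := sum_shift_aux q (g b) an ad hne
        rw [this]
        have h1 : q ad * (g b an - g b ad) ≤ 0 :=
          mul_nonpos_of_nonneg_of_nonpos (hpos ad) (by linarith [hg b])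
        linarith [hcon b]
    · rw [Function.update_of_ne (Ne.symm hne), Function.update_self]
    · have := sum_shift_aux q F an ad hne
      rw [this]
      nlinarith [hpos ad, hF]
  refine ⟨main, ?_⟩
  rintro ⟨q, hq, hopt⟩
  obtain ⟨q', hq', hz, hle⟩ := main q hq
  exact ⟨q', ⟨hq', fun q'' hq'' => le_trans (hopt q'' hq'') hle⟩, hz⟩
end

section
/- Let Z ⊆ S be a set of actions (the disconnecting actions). Suppose that for every a^d ∈ Z there exists a^n ∈ S \ Z with g(b)(a^n) ≤ g(b)(a^d) for every b ∈ B and F(a^n) > F(a^d). Then every optimal q for the attacker's stage linear program satisfies q(a) = 0 for all a ∈ Z; that is, the support of the attacker's optimal mixed strategy is contained in S \ Z. -/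
/-- If every disconnecting action `ad ∈ Z` is strictly dominated by some
non-disconnecting action `aN ∉ Z` (`g b aN ≤ g b ad` for all `b`, `F aN > F ad`),
then every optimal mixed strategy of the attacker's stage linear program puts zero
probability on all of `Z`: its support is contained in `S \ Z`. -/
theorem attacker_lp_support_avoids_disconnecting {S B : Type*} [Fintype S] [Nonempty S]
    [Fintype B] [Nonempty B]
    (F : S → ℝ) (g : B → S → ℝ) (Z : Set S)
    (hdom : ∀ ad ∈ Z, ∃ an ∉ Z, (∀ b, g b an ≤ g b ad) ∧ F ad < F an)
    (q : S → ℝ)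
    (hfeas : (∀ a, 0 ≤ q a) ∧ (∑ a, q a) = 1 ∧ ∀ b, (∑ a, q a * g b a) ≤ 0)
    (hopt : ∀ q' : S → ℝ,
      ((∀ a, 0 ≤ q' a) ∧ (∑ a, q' a) = 1 ∧ ∀ b, (∑ a, q' a * g b a) ≤ 0) →
      (∑ a, q' a * F a) ≤ ∑ a, q a * F a) :
    ∀ a ∈ Z, q a = 0 := by
  classical
  obtain ⟨hq0, hq1, hqg⟩ := hfeas
  intro ad hadZ
  by_contra hne
  have hpos : 0 < q ad := lt_of_le_of_ne (hq0 ad) (Ne.symm hne)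
  obtain ⟨aN, hanZ, hgle, hFlt⟩ := hdom ad hadZ
  have hne' : aN ≠ ad := fun h => hanZ (h ▸ hadZ)
  set q' : S → ℝ := fun a =>
    q a + (if a = aN then q ad else 0) - (if a = ad then q ad else 0) with hq'
  have key : ∀ h : S → ℝ,
      (∑ a, q' a * h a) = (∑ a, q a * h a) + q ad * h aN - q ad * h ad := by
    intro h
    simp only [hq', add_mul, sub_mul, ite_mul, zero_mul]
    rw [Finset.sum_sub_distrib, Finset.sum_add_distrib,
      Finset.sum_ite_eq' Finset.univ aN (fun a => q ad * h a),
      Finset.sum_ite_eq' Finset.univ ad (fun a => q ad * h a)]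
    simp
  have hfeas' : (∀ a, 0 ≤ q' a) ∧ (∑ a, q' a) = 1 ∧ ∀ b, (∑ a, q' a * g b a) ≤ 0 := by
    refine ⟨?_, ?_, ?_⟩
    · intro x
      simp only [hq']
      by_cases h1 : x = aN
      · subst h1
        simp [hne', add_nonneg (hq0 x) (le_of_lt hpos)]
      · by_cases h2 : x = ad
        · subst h2; simp [h1]
        · simp [h1, h2, hq0 x]
    · have := key (fun _ => 1)
      simp only [mul_one] at this
      rw [this, hq1]; ring
    · intro b
      have := key (g b)
      rw [this]
      have h1 : q ad * g b aN ≤ q ad * g b ad :=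
        mul_le_mul_of_nonneg_left (hgle b) (le_of_lt hpos)
      linarith [hqg b]
  have hlt : (∑ a, q a * F a) < ∑ a, q' a * F a := by
    rw [key F]
    have : q ad * F ad < q ad * F aN := (mul_lt_mul_iff_right₀ hpos).mpr hFlt
    linarith
  exact absurd (hopt q' hfeas') (not_le.mpr hlt)
end
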